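/- arXiv:1305.5966 — 2 statements merged into one kernel-verified Lean document; each statement's English description precedes it below -/
import Mathlib

section
/- Let S = C[x_0,...,x_n] and let M be a finitely generated graded S-module that is Cohen-Macaulay. Then the maximal degree sequence t_i(M) = max{j : β_{i,j}(M) ≠ 0} is strictly increasing in i, for i ranging over indices where the minimal free resolution is nonzero. -/
open MvPolynomial DirectSum

noncomputable section

/-- The standard graded polynomial ring `ℂ[x_1,…,x_m]`. -/
abbrev PolyS (m : ℕ) : Type := MvPolynomial (Fin m) ℂ

/-- The degree-`e` homogeneous piece of the polynomial ring (zero for `e < 0`). -/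
def hpiece (m : ℕ) (e : ℤ) : Submodule ℂ (PolyS m) :=
  if 0 ≤ e then homogeneousSubmodule (Fin m) ℂ e.toNat else ⊥

/-- The graded free module `⊕_j S(-j)^{b j}`. -/
abbrev FreeMod (m : ℕ) (b : ℤ → ℕ) : Type :=
  DirectSum ℤ (fun j : ℤ => Fin (b j) → PolyS m)

/-- The degree-`deg` homogeneous piece of the graded free module `⊕_j S(-j)^{b j}`. -/
def freePiece (m : ℕ) (b : ℤ → ℕ) (deg : ℤ) : Submodule ℂ (FreeMod m b) where
  carrier := {x | ∀ (j : ℤ) (i : Fin (b j)), x j i ∈ hpiece m (deg - j)}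
  add_mem' := by
    intro x y hx hy j i
    simp only [DirectSum.add_apply, Pi.add_apply]
    exact add_mem (hx j i) (hy j i)
  zero_mem' := by
    intro j i
    simp only [DirectSum.zero_apply, Pi.zero_apply]
    exact zero_mem _
  smul_mem' := by
    intro c x hx j i
    simp only [DirectSum.smul_apply, Pi.smul_apply]
    exact Submodule.smul_mem _ c (hx j i)

/-- The irrelevant maximal ideal `(x_1,…,x_m)`. -/
def mIdeal (m : ℕ) : Ideal (PolyS m) := Ideal.span (Set.range (X : Fin m → PolyS m))

/-- A (ℤ-)grading on an `S`-module, compatible with the standard grading of `S`. -/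
structure GradedSMod (m : ℕ) (M : Type) [AddCommGroup M] [Module ℂ M]
    [Module (PolyS m) M] [IsScalarTower ℂ (PolyS m) M] where
  piece : ℤ → Submodule ℂ M
  internal : DirectSum.IsInternal piece
  smul_mem : ∀ (d : ℕ) (p : PolyS m), p ∈ homogeneousSubmodule (Fin m) ℂ d →
    ∀ (j : ℤ) (x : M), x ∈ piece j → p • x ∈ piece (d + j)

/-- A minimal graded free resolution of a graded module `M`, recorded together with
its graded Betti numbers `b i j`. -/
structure MinFreeRes (m : ℕ) (M : Type) [AddCommGroup M] [Module ℂ M]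
    [Module (PolyS m) M] [IsScalarTower ℂ (PolyS m) M] (gM : GradedSMod m M) where
  b : ℕ → ℤ → ℕ
  bfin : ∀ i, (Function.support (b i)).Finite
  diff : ∀ i : ℕ, FreeMod m (b (i + 1)) →ₗ[PolyS m] FreeMod m (b i)
  aug : FreeMod m (b 0) →ₗ[PolyS m] M
  aug_surjective : Function.Surjective aug
  exact_aug : LinearMap.ker aug = LinearMap.range (diff 0)
  exact : ∀ i, LinearMap.ker (diff i) = LinearMap.range (diff (i + 1))
  graded_diff : ∀ (i : ℕ) (deg : ℤ) (x : FreeMod m (b (i + 1))),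
    x ∈ freePiece m (b (i + 1)) deg → diff i x ∈ freePiece m (b i) deg
  graded_aug : ∀ (deg : ℤ) (x : FreeMod m (b 0)),
    x ∈ freePiece m (b 0) deg → aug x ∈ gM.piece deg
  minimal : ∀ (i : ℕ) (x : FreeMod m (b (i + 1))),
    diff i x ∈ (mIdeal m) • (⊤ : Submodule (PolyS m) (FreeMod m (b i)))

/-- `tmax c` : the largest degree `j` with `c j ≠ 0` (the `i`-th entry of the maximal
degree sequence, when `c = b i`). -/
def tmax (c : ℤ → ℕ) : ℤ := sSup {j | c j ≠ 0}

/-- The Castelnuovo–Mumford regularity read off from a Betti table. -/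
def regOf (b : ℕ → ℤ → ℕ) : ℤ := sSup {z | ∃ i j, b i j ≠ 0 ∧ z = j - (i : ℤ)}


/-- The grading on (the underlying module of) a homogeneous ideal `J` induced from the
standard grading of the polynomial ring. -/
def NatIdealGrading (m : ℕ) (J : Ideal (PolyS m)) (g : GradedSMod m ↥J) : Prop :=
  ∀ (j : ℤ) (x : ↥J), x ∈ g.piece j ↔ (x : PolyS m) ∈ hpiece m j

/-- The ideal `I = (y_1,…,y_N)` inside `S = ℂ[x_0,…,x_n,y_1,…,y_N]`, where the last `N`
variables are the `y`'s. -/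
def yIdeal (n N : ℕ) : Ideal (PolyS (n + 1 + N)) :=
  Ideal.span {p | ∃ i : Fin (n + 1 + N), n + 1 ≤ (i : ℕ) ∧ p = X i}

/-- Cohen–Macaulayness of a module with minimal free resolution `F` of length `r`,
expressed through the standard characterization: `Ext^i(M, S) = 0` for `i < r = pd M`,
i.e. the dual of the minimal free resolution is exact except at the last spot. -/
def IsCMres (m : ℕ) {M : Type} [AddCommGroup M] [Module ℂ M]
    [Module (PolyS m) M] [IsScalarTower ℂ (PolyS m) M] {gM : GradedSMod m M}
    (F : MinFreeRes m M gM) (r : ℕ) : Prop :=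
  (0 < r → LinearMap.ker (F.diff 0).dualMap = ⊥) ∧
  ∀ i, i + 1 < r →
    LinearMap.ker ((F.diff (i + 1)).dualMap) = LinearMap.range ((F.diff i).dualMap)

/-- A bundled graded module over `ℂ[x_1,…,x_m]`. -/
structure GradedModuleBundle (m : ℕ) where
  carrier : Type
  [isAddCommGroup : AddCommGroup carrier]
  [isModC : Module ℂ carrier]
  [isModS : Module (PolyS m) carrier]
  [isTower : IsScalarTower ℂ (PolyS m) carrier]
  grading : GradedSMod m carrier

attribute [instance] GradedModuleBundle.isAddCommGroup GradedModuleBundle.isModC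
  GradedModuleBundle.isModS GradedModuleBundle.isTower

/-! Let `t = t_i(M)` and let `e` be a basis vector of `F_i` of degree `t`, with coordinate
functional `e^*`. If `e^* ∘ d` vanished, `e^*` would be a cocycle of `Hom(F, S)`, hence a
coboundary `φ ∘ d` since `Ext^i(M, S) = 0` for `i < pd M`; minimality would then give
`1 = e^*(e) = φ (d e) ∈ 𝔪`. So `e^* ∘ d` is nonzero on some basis vector of `F_{i+1}`, of
degree `j` say; that entry of `d` is a nonzero form of degree `j - t` lying in `𝔪`, whence
`t < j ≤ t_{i+1}(M)`. -/

theorem le_tmax {c : ℤ → ℕ} (hc : (Function.support c).Finite) {j : ℤ} (hj : c j ≠ 0) :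
    j ≤ tmax c :=
  le_csSup hc.bddAbove hj

theorem tmax_ne_zero {c : ℤ → ℕ} (hc : (Function.support c).Finite) (hne : c ≠ 0) :
    c (tmax c) ≠ 0 :=
  Set.Nonempty.csSup_mem (Function.support_nonempty_iff.mpr hne) hc

theorem LinearMap.apply_mem_of_mem_smul_top {R N : Type*} [CommRing R] [AddCommGroup N]
    [Module R N] (φ : N →ₗ[R] R) {I : Ideal R} {y : N} (hy : y ∈ I • (⊤ : Submodule R N)) :
    φ y ∈ I := by
  simpa [Ideal.smul_eq_mul] using Submodule.smul_top_le_comap_smul_top I φ hy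

section PolynomialRing

variable {m : ℕ}

theorem mIdeal_le_ker_constantCoeff :
    mIdeal m ≤ RingHom.ker (constantCoeff (σ := Fin m) (R := ℂ)) := by
  rw [mIdeal, Ideal.span_le]
  rintro _ ⟨i, rfl⟩
  simp

theorem one_notMem_mIdeal : (1 : PolyS m) ∉ mIdeal m := fun h => by
  simpa using mIdeal_le_ker_constantCoeff h

theorem pos_of_mem_hpiece_of_mem_mIdeal {p : PolyS m} {e : ℤ} (hp : p ∈ hpiece m e)
    (hpm : p ∈ mIdeal m) (hp0 : p ≠ 0) : 0 < e := by
  rw [hpiece] at hp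
  split_ifs at hp with he
  · refine lt_of_le_of_ne he fun he0 => hp0 ?_
    rw [← he0, Int.toNat_zero, mem_homogeneousSubmodule,
      ← totalDegree_zero_iff_isHomogeneous, totalDegree_eq_zero_iff_eq_C] at hp
    have hc : coeff 0 p = 0 := by
      simpa [constantCoeff_eq] using mIdeal_le_ker_constantCoeff hpm
    rw [hp, hc, C_0]
  · exact absurd hp hp0

end PolynomialRing

section FreeModule

variable {m : ℕ} {b : ℤ → ℕ}

variable (m b) in
def freeBasis : Module.Basis (Σ j, Fin (b j)) (PolyS m) (FreeMod m b) :=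
  DFinsupp.basis fun _ => Pi.basisFun _ _

theorem freeBasis_apply (s : Σ j, Fin (b j)) :
    freeBasis m b s = DFinsupp.single s.1 (Pi.single s.2 1) := by
  simp [freeBasis, DFinsupp.basis]

theorem freeBasis_mem_freePiece (j : ℤ) (k : Fin (b j)) :
    freeBasis m b ⟨j, k⟩ ∈ freePiece m b j := by
  intro j' k'
  rw [freeBasis_apply]
  by_cases hj : j' = j
  · subst hj
    rw [DFinsupp.single_eq_same, hpiece, if_pos (sub_self j').ge, sub_self, Int.toNat_zero]
    by_cases hk : k = k'
    · subst hk
      rw [Pi.single_eq_same, mem_homogeneousSubmodule]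
      exact isHomogeneous_one (Fin m) ℂ
    · rw [Pi.single_eq_of_ne' hk]
      exact zero_mem _
  · rw [DFinsupp.single_eq_of_ne hj]
    exact zero_mem _

theorem freeBasis_notMem_mIdeal_smul_top (s : Σ j, Fin (b j)) :
    freeBasis m b s ∉ mIdeal m • (⊤ : Submodule (PolyS m) (FreeMod m b)) := fun h =>
  one_notMem_mIdeal (by simpa using ((freeBasis m b).coord s).apply_mem_of_mem_smul_top h)

end FreeModule

namespace MinFreeRes

variable {m : ℕ} {M : Type} [AddCommGroup M] [Module ℂ M] [Module (PolyS m) M]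
  [IsScalarTower ℂ (PolyS m) M] {gM : GradedSMod m M} (F : MinFreeRes m M gM)

theorem b_ne_zero_of_b_succ_ne_zero {i : ℕ} (h : F.b (i + 1) ≠ 0) : F.b i ≠ 0 := by
  intro h0
  obtain ⟨j, hj⟩ := Function.ne_iff.mp h
  have hdiff : F.diff i = 0 :=
    LinearMap.ext fun x => DFinsupp.ext fun j' => funext fun k =>
      absurd k.isLt (by simp [h0])
  have hrange : freeBasis m (F.b (i + 1)) ⟨j, ⟨0, Nat.pos_of_ne_zero hj⟩⟩ ∈
      LinearMap.range (F.diff (i + 1)) := by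
    simp [← F.exact, hdiff]
  obtain ⟨y, hy⟩ := hrange
  exact freeBasis_notMem_mIdeal_smul_top _ (hy ▸ F.minimal (i + 1) y)

theorem coord_notMem_range_dualMap (i : ℕ) (s : Σ j, Fin (F.b (i + 1) j)) :
    (freeBasis m (F.b (i + 1))).coord s ∉ LinearMap.range (F.diff i).dualMap := by
  rintro ⟨φ, hφ⟩
  apply one_notMem_mIdeal
  have hφs : φ (F.diff i (freeBasis m _ s)) = 1 := by
    simpa using LinearMap.congr_fun hφ (freeBasis m _ s)
  exact hφs ▸ φ.apply_mem_of_mem_smul_top (F.minimal i _)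

theorem lt_of_coord_diff_ne_zero {i : ℕ} {t j : ℤ} {k : Fin (F.b i t)}
    {l : Fin (F.b (i + 1) j)}
    (h : (freeBasis m (F.b i)).coord ⟨t, k⟩ (F.diff i (freeBasis m _ ⟨j, l⟩)) ≠ 0) :
    t < j := by
  have hdeg := F.graded_diff i j _ (freeBasis_mem_freePiece j l) t k
  have hm := ((freeBasis m (F.b i)).coord ⟨t, k⟩).apply_mem_of_mem_smul_top
    (F.minimal i (freeBasis m _ ⟨j, l⟩))
  simpa using pos_of_mem_hpiece_of_mem_mIdeal hdeg hm h

end MinFreeRes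

theorem IsCMres.dualMap_diff_coord_ne_zero {m : ℕ} {M : Type} [AddCommGroup M] [Module ℂ M]
    [Module (PolyS m) M] [IsScalarTower ℂ (PolyS m) M] {gM : GradedSMod m M}
    {F : MinFreeRes m M gM} {r : ℕ} (hCM : IsCMres m F r) {i : ℕ} (hi : i < r)
    (s : Σ j, Fin (F.b i j)) :
    (F.diff i).dualMap ((freeBasis m (F.b i)).coord s) ≠ 0 := by
  intro h0
  have hker : (freeBasis m (F.b i)).coord s ∈ LinearMap.ker (F.diff i).dualMap := h0
  cases i with
  | zero =>
    rw [hCM.1 hi, Submodule.mem_bot] at hker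
    simpa using LinearMap.congr_fun hker (freeBasis m _ s)
  | succ i =>
    rw [hCM.2 i hi] at hker
    exact F.coord_notMem_range_dualMap i s hker

/-- Over `S = ℂ[x_0,…,x_n]`, if a finitely generated graded module `M`
is Cohen–Macaulay then its maximal degree sequence `t_i(M) = max{j : β_{i,j}(M) ≠ 0}` is
strictly increasing on the indices where the minimal free resolution is nonzero. -/
theorem stmt0 (n : ℕ) (M : Type) [AddCommGroup M] [Module ℂ M]
    [Module (PolyS (n + 1)) M] [IsScalarTower ℂ (PolyS (n + 1)) M]
    (gM : GradedSMod (n + 1) M) (F : MinFreeRes (n + 1) M gM) (r : ℕ)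
    (hlen : ∀ i, r < i → F.b i = 0)
    (hCM : IsCMres (n + 1) F r) :
    ∀ i, F.b (i + 1) ≠ 0 → tmax (F.b i) < tmax (F.b (i + 1)) := by
  intro i hne
  have hir : i < r := by
    by_contra! h
    exact hne (hlen (i + 1) (by omega))
  have ht : F.b i (tmax (F.b i)) ≠ 0 :=
    tmax_ne_zero (F.bfin i) (F.b_ne_zero_of_b_succ_ne_zero hne)
  let k : Fin (F.b i (tmax (F.b i))) := ⟨0, Nat.pos_of_ne_zero ht⟩
  obtain ⟨⟨j, l⟩, hjl⟩ : ∃ s, (F.diff i).dualMap ((freeBasis (n + 1) _).coord ⟨_, k⟩)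
      (freeBasis (n + 1) _ s) ≠ 0 := by
    by_contra! h
    exact hCM.dualMap_diff_coord_ne_zero hir _ ((freeBasis (n + 1) _).ext h)
  calc tmax (F.b i) < j := F.lt_of_coord_diff_ne_zero hjl
    _ ≤ tmax (F.b (i + 1)) := le_tmax (F.bfin (i + 1)) l.pos.ne'

end
end

section
/- Fix n ≥ 1 and N ≥ 2. For d defined as the largest integer with binom(n+d,n) ≤ binom(k+N−1,k), there is a constant c > 0 (depending on n and N) such that d ≥ c·k^{(N−1)/n} for all sufficiently large k. Hence the regularity k+d+1 of the ideals produced by the construction grows at least like c·k^{(N−1)/n} in the generating degree k. -/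
open MvPolynomial DirectSum

noncomputable section

/-- Fix `n ≥ 1` and `N ≥ 2`. If `d k` denotes the largest integer `d`
with `(n+d choose n) ≤ (k+N-1 choose k)`, then there is a constant `c > 0` such that
`d k ≥ c·k^{(N-1)/n}` for all sufficiently large `k`; hence the regularity `k + d k + 1`
of the constructed ideals grows at least like `c·k^{(N-1)/n}` in the generating
degree `k`. -/
theorem stmt14 (n N : ℕ) (hn : 1 ≤ n) (hN : 2 ≤ N) (dk : ℕ → ℕ)
    (hdk : ∀ k : ℕ, (n + dk k).choose n ≤ (k + N - 1).choose k ∧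
      ∀ d' : ℕ, (n + d').choose n ≤ (k + N - 1).choose k → d' ≤ dk k) :
    ∃ c : ℝ, 0 < c ∧ ∃ K : ℕ, ∀ k : ℕ, K ≤ k →
      c * (k : ℝ) ^ (((N : ℝ) - 1) / (n : ℝ)) ≤ (dk k : ℝ) ∧
      c * (k : ℝ) ^ (((N : ℝ) - 1) / (n : ℝ)) ≤ ((k + dk k + 1 : ℕ) : ℝ) := by
  classical
  have hn0 : (0:ℝ) < n := by exact_mod_cast hn
  set M : ℕ := N - 1 with hM
  have hMcast : ((M : ℕ) : ℝ) = (N : ℝ) - 1 := by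
    rw [hM, Nat.cast_sub (by omega)]; simp
  have hN1 : (0:ℝ) < (N:ℝ) - 1 := by
    rw [← hMcast]; exact_mod_cast (by omega : 1 ≤ M)
  set α : ℝ := ((N:ℝ) - 1) / n with hα
  have hα0 : 0 < α := div_pos hN1 hn0
  set c : ℝ := ((Nat.factorial M : ℝ)) ^ (-(1:ℝ)/(n:ℝ)) / 2 with hc
  have hc0 : 0 < c := by
    have := Real.rpow_pos_of_pos (show (0:ℝ) < (Nat.factorial M : ℝ) by exact_mod_cast Nat.factorial_pos M)
      (-(1:ℝ)/(n:ℝ))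
    positivity
  refine ⟨c, hc0, ⌈(((n:ℝ)+1)/c) ^ ((n:ℝ)/((N:ℝ)-1))⌉₊ + 1, ?_⟩
  intro k hk
  have hkR : (((n:ℝ)+1)/c) ^ ((n:ℝ)/((N:ℝ)-1)) ≤ (k:ℝ) := by
    refine le_trans (Nat.le_ceil _) ?_
    exact_mod_cast le_trans (Nat.le_succ _) hk
  have hx0 : (0:ℝ) ≤ ((n:ℝ)+1)/c := by positivity
  have hk0 : (0:ℝ) ≤ (k:ℝ) := Nat.cast_nonneg k
  -- n + 1 ≤ c * k^α
  have hn1 : (n:ℝ) + 1 ≤ c * (k:ℝ) ^ α := by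
    have hne : (n:ℝ) ≠ 0 := hn0.ne'
    have hNe : (N:ℝ)-1 ≠ 0 := hN1.ne'
    have h2 : ((n:ℝ)+1)/c = ((((n:ℝ)+1)/c) ^ ((n:ℝ)/((N:ℝ)-1))) ^ α := by
      rw [← Real.rpow_mul hx0, show (n:ℝ)/((N:ℝ)-1) * α = 1 by rw [hα]; field_simp,
        Real.rpow_one]
    have h3 : ((n:ℝ)+1)/c ≤ (k:ℝ) ^ α := by
      rw [h2]
      exact Real.rpow_le_rpow (Real.rpow_nonneg hx0 _) hkR hα0.le
    rw [div_le_iff₀ hc0] at h3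
    linarith [h3]
  set d' : ℕ := ⌈c * (k:ℝ) ^ α⌉₊ with hd'
  have hck0 : (0:ℝ) ≤ c * (k:ℝ)^α := by positivity
  have hle : c * (k:ℝ)^α ≤ (d':ℝ) := Nat.le_ceil _
  have hub : (d':ℝ) < c * (k:ℝ)^α + 1 := Nat.ceil_lt_add_one hck0
  have hsum : ((n:ℝ) + (d':ℝ)) ≤ 2 * (c * (k:ℝ)^α) := by linarith
  have hM! : (0:ℝ) < (Nat.factorial M : ℝ) := by exact_mod_cast Nat.factorial_pos M
  -- (2 c k^α)^n = (M!)⁻¹ * k^M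
  have hpow : (2 * (c * (k:ℝ)^α))^n = ((Nat.factorial M : ℝ))⁻¹ * (k:ℝ)^M := by
    have h2c : 2 * c = ((Nat.factorial M : ℝ)) ^ (-(1:ℝ)/(n:ℝ)) := by rw [hc]; ring
    rw [show 2 * (c * (k:ℝ)^α) = (2*c) * (k:ℝ)^α by ring, mul_pow, h2c,
      ← Real.rpow_natCast (((Nat.factorial M : ℝ)) ^ (-(1:ℝ)/(n:ℝ))) n,
      ← Real.rpow_mul hM!.le,
      show (-(1:ℝ)/(n:ℝ)) * (n:ℝ) = -1 by field_simp,
      Real.rpow_neg_one,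
      ← Real.rpow_natCast ((k:ℝ)^α) n, ← Real.rpow_mul hk0,
      show α * (n:ℝ) = (M:ℝ) by rw [hα, hMcast]; field_simp,
      Real.rpow_natCast]
  have key : ((n:ℝ) + (d':ℝ))^n ≤ ((Nat.factorial M : ℝ))⁻¹ * ((k:ℝ)+1)^M := by
    calc ((n:ℝ) + (d':ℝ))^n ≤ (2 * (c * (k:ℝ)^α))^n := by
          apply pow_le_pow_left₀ (by positivity) hsum
      _ = ((Nat.factorial M : ℝ))⁻¹ * (k:ℝ)^M := hpow
      _ ≤ ((Nat.factorial M : ℝ))⁻¹ * ((k:ℝ)+1)^M := by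
          apply mul_le_mul_of_nonneg_left (pow_le_pow_left₀ hk0 (by linarith) M)
            (by positivity)
  -- binomial chain
  have hch : (n + d').choose n ≤ (k + N - 1).choose k := by
    have e1 : k + N - 1 = k + M := by omega
    rw [e1, show (k + M).choose k = (k + M).choose M from Nat.choose_symm_add]
    have hA : ((n + d').choose n : ℝ) ≤ ((n + d')^n : ℝ) := by
      exact_mod_cast Nat.choose_le_pow (n + d') n
    have hB : (((k+1) ^ M : ℝ)) / (Nat.factorial M : ℝ) ≤ ((k + M).choose M : ℝ) := by
      have := Nat.pow_le_choose (α := ℝ) M (k + M)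
      have e2 : k + M + 1 - M = k + 1 := by omega
      rw [e2] at this
      exact_mod_cast this
    have : ((n + d').choose n : ℝ) ≤ ((k + M).choose M : ℝ) := by
      refine hA.trans (le_trans ?_ hB)
      rw [div_eq_inv_mul]
      exact key
    exact_mod_cast this
  have hd'le : d' ≤ dk k := (hdk k).2 d' hch
  have hmain : c * (k:ℝ) ^ α ≤ (dk k : ℝ) :=
    hle.trans (by exact_mod_cast hd'le)
  exact ⟨hmain, hmain.trans (by exact_mod_cast (by omega : dk k ≤ k + dk k + 1))⟩

end
end
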